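/- In the A_d* lattice scaled by β > 0, any two lattice points whose Voronoi cells (scaled permutahedra) do not intersect have Voronoi cells at Euclidean distance at least β·√2/(d+1). -/

import Mathlib

/-!
The points of `A_d^*` are the vectors `β • p n` with `n ∈ ℤ^(d+1)`, where `p n = mean(n) • 𝟙 - n`
is minus the orthogonal projection of `n` onto the sum-zero hyperplane; the generator `g_t` is `p`
of the indicator of the last `t` coordinates. Write `ℓ₁ = β • p n₁` and `ℓ₂ = β • p n₂`.

If `n₂ - n₁` takes only two consecutive values, the midpoint of `ℓ₁` and `ℓ₂` lies in both cells:
after shifting `s = n₂ - n₁` to `{0, 1}`-values this is `⟪p s, p k⟫ ≤ ‖p k‖²` for every integer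
`k`, which comes down to `k² - s k ≥ max 0 (k - s)` coordinatewise. So disjoint cells force
`(n₂ - n₁) i - (n₂ - n₁) j ≥ 2` for some `i, j`.

The neighbours `ℓ ± β • p eᵢ` confine the cell of `ℓ` to `(x - ℓ) i - (x - ℓ) j ≤ β d / (d + 1)`.
Hence `(x - y) i - (x - y) j ≥ 2β - 2β d / (d + 1) = 2β / (d + 1)` for `x`, `y` in the two cells,
and `‖eᵢ - eⱼ‖ = √2` gives `‖x - y‖ ≥ √2 β / (d + 1)`.
-/

/-- The standard generators `g_t` of the `A_d^*` lattice in the sum-zero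
hyperplane of `ℝ^(d+1)`: `g_t = (1/(d+1))·(t,…,t, t−(d+1),…,t−(d+1))` with
`d+1−t` coordinates equal to `t` and `t` coordinates equal to `t−(d+1)`. -/
noncomputable def AstarGen (d t : ℕ) : EuclideanSpace ℝ (Fin (d + 1)) :=
  WithLp.toLp 2 fun i => if (i : ℕ) + t < d + 1 then (t : ℝ) / ((d : ℝ) + 1)
           else ((t : ℝ) - ((d : ℝ) + 1)) / ((d : ℝ) + 1)

/-- The `A_d^*` lattice scaled by `β`: all `β`-scaled integer linear combinations
of the generators `g_1, …, g_d`. -/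
noncomputable def AstarLattice (d : ℕ) (β : ℝ) : Set (EuclideanSpace ℝ (Fin (d + 1))) :=
  {x | ∃ m : ℕ → ℤ, x = β • ∑ t ∈ Finset.Icc 1 d, m t • AstarGen d t}

/-- The Voronoi cell of a lattice point `ℓ` (a scaled permutahedron): the points
at least as close to `ℓ` as to any other lattice point. -/
noncomputable def voronoiCell (d : ℕ) (β : ℝ) (ℓ : EuclideanSpace ℝ (Fin (d + 1))) :
    Set (EuclideanSpace ℝ (Fin (d + 1))) :=
  {x | ∀ ℓ' ∈ AstarLattice d β, dist x ℓ ≤ dist x ℓ'}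

open Finset
open scoped InnerProductSpace

noncomputable def astarPoint (d : ℕ) : (Fin (d + 1) → ℤ) →+ EuclideanSpace ℝ (Fin (d + 1)) where
  toFun n := WithLp.toLp 2 fun i => (∑ j, (n j : ℝ)) / ((d : ℝ) + 1) - n i
  map_zero' := by ext; simp
  map_add' a b := by ext i; simp [sum_add_distrib]; ring

@[simp]
lemma astarPoint_apply (d : ℕ) (n : Fin (d + 1) → ℤ) (i : Fin (d + 1)) :
    astarPoint d n i = (∑ j, (n j : ℝ)) / ((d : ℝ) + 1) - n i := rfl

lemma astarPoint_const (d : ℕ) (c : ℤ) : astarPoint d (fun _ => c) = 0 := by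
  ext i
  simp only [astarPoint_apply, sum_const, card_univ, Fintype.card_fin, nsmul_eq_mul]
  push_cast
  field_simp
  simp

def tailIndicator (d t : ℕ) : Fin (d + 1) → ℤ := fun i => if (i : ℕ) + t < d + 1 then 0 else 1

lemma sum_tailIndicator (d t : ℕ) (ht : t ≤ d + 1) : ∑ i, (tailIndicator d t i : ℝ) = t := by
  simp only [tailIndicator, Int.cast_ite, Int.cast_zero, Int.cast_one]
  rw [Fin.sum_univ_eq_sum_range (fun i => if i + t < d + 1 then (0 : ℝ) else 1), sum_ite,
    sum_const_zero, sum_const, zero_add, nsmul_one]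
  congr
  rw [show (range (d + 1)).filter (fun i => ¬ i + t < d + 1) = Ico (d + 1 - t) (d + 1) by
    ext i; simp only [mem_filter, mem_range, mem_Ico]; omega]
  simp; omega

lemma AstarGen_eq_astarPoint (d t : ℕ) (ht : t ≤ d + 1) :
    AstarGen d t = astarPoint d (tailIndicator d t) := by
  ext i
  simp only [AstarGen, astarPoint_apply, sum_tailIndicator d t ht]
  simp only [tailIndicator]
  split_ifs <;> field_simp <;> simp

def astarGenSpan (d : ℕ) : AddSubgroup (EuclideanSpace ℝ (Fin (d + 1))) where
  carrier := {v | ∃ m : ℕ → ℤ, v = ∑ t ∈ Icc 1 d, m t • AstarGen d t}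
  add_mem' := by
    rintro _ _ ⟨m, rfl⟩ ⟨m', rfl⟩
    exact ⟨m + m', by simp only [Pi.add_apply, add_zsmul, sum_add_distrib]⟩
  zero_mem' := ⟨0, by simp⟩
  neg_mem' := by
    rintro _ ⟨m, rfl⟩
    exact ⟨-m, by simp only [Pi.neg_apply, neg_zsmul, sum_neg_distrib]⟩

lemma astarPoint_tailIndicator_mem (d t : ℕ) (ht : t ≤ d + 1) :
    astarPoint d (tailIndicator d t) ∈ astarGenSpan d := by
  rcases Nat.eq_zero_or_pos t with rfl | ht0
  · have : tailIndicator d 0 = fun _ => 0 := by ext i; simp [tailIndicator]; omega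
    simp [this, astarPoint_const, zero_mem]
  rcases ht.eq_or_lt with rfl | htd
  · have : tailIndicator d (d + 1) = fun _ => 1 := by ext i; simp [tailIndicator]; omega
    simp [this, astarPoint_const, zero_mem]
  refine ⟨Pi.single t 1, ?_⟩
  rw [← AstarGen_eq_astarPoint d t ht, sum_eq_single_of_mem t (by simp; omega)]
  · simp
  · intro s _ hst
    simp [hst]

lemma single_eq_tailIndicator_sub (d : ℕ) (i : Fin (d + 1)) :
    Pi.single i 1 = tailIndicator d (d + 1 - (i : ℕ)) - tailIndicator d (d - (i : ℕ)) := by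
  ext j
  have := i.is_lt
  rcases eq_or_ne j i with rfl | hji
  · simp [tailIndicator]; omega
  · have : (j : ℕ) ≠ i := Fin.val_ne_of_ne hji
    simp only [Pi.single_apply, hji, Pi.sub_apply, tailIndicator]
    split_ifs <;> simp <;> omega

lemma astarPoint_mem_astarGenSpan (d : ℕ) (n : Fin (d + 1) → ℤ) :
    astarPoint d n ∈ astarGenSpan d := by
  rw [← univ_sum_single n, map_sum]
  refine AddSubgroup.sum_mem _ fun i _ => ?_
  rw [← mul_one (n i), ← smul_eq_mul, Pi.single_smul, map_zsmul, single_eq_tailIndicator_sub,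
    map_sub]
  exact zsmul_mem (sub_mem (astarPoint_tailIndicator_mem d _ (by omega))
    (astarPoint_tailIndicator_mem d _ (by omega))) _

lemma mem_AstarLattice_iff {d : ℕ} {β : ℝ} {ℓ : EuclideanSpace ℝ (Fin (d + 1))} :
    ℓ ∈ AstarLattice d β ↔ ∃ n, ℓ = β • astarPoint d n := by
  constructor
  · rintro ⟨m, rfl⟩
    refine ⟨∑ t ∈ Icc 1 d, m t • tailIndicator d t, ?_⟩
    rw [map_sum]
    refine congrArg _ (sum_congr rfl fun t ht => ?_)
    rw [map_zsmul, AstarGen_eq_astarPoint d t (by simp at ht; omega)]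
  · rintro ⟨n, rfl⟩
    obtain ⟨m, hm⟩ := astarPoint_mem_astarGenSpan d n
    exact ⟨m, by rw [hm]⟩

lemma inner_astarPoint (d : ℕ) (z : EuclideanSpace ℝ (Fin (d + 1))) (n : Fin (d + 1) → ℤ) :
    ⟪z, astarPoint d n⟫_ℝ = (∑ i, z i) * (∑ i, (n i : ℝ)) / ((d : ℝ) + 1) - ∑ i, z i * n i := by
  simp only [PiLp.inner_apply, astarPoint_apply, RCLike.inner_apply, conj_trivial]
  rw [sum_mul, sum_div, ← sum_sub_distrib]
  exact sum_congr rfl fun i _ => by ring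

lemma inner_astarPoint_astarPoint (d : ℕ) (a b : Fin (d + 1) → ℤ) :
    ⟪astarPoint d a, astarPoint d b⟫_ℝ =
      ∑ i, (a i : ℝ) * b i - (∑ i, (a i : ℝ)) * (∑ i, (b i : ℝ)) / ((d : ℝ) + 1) := by
  have hsum : ∑ i, astarPoint d a i = 0 := by
    simp only [astarPoint_apply, sum_sub_distrib, sum_const, card_univ, Fintype.card_fin,
      nsmul_eq_mul]
    field_simp
    push_cast
    ring
  rw [inner_astarPoint, hsum]
  simp only [astarPoint_apply, sub_mul, sum_sub_distrib, ← mul_sum]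
  ring

lemma norm_sq_astarPoint (d : ℕ) (n : Fin (d + 1) → ℤ) :
    ‖astarPoint d n‖ ^ 2 = ∑ i, (n i : ℝ) ^ 2 - (∑ i, (n i : ℝ)) ^ 2 / ((d : ℝ) + 1) := by
  rw [← real_inner_self_eq_norm_sq, inner_astarPoint_astarPoint]
  simp only [sq]

lemma dist_le_dist_add_iff {E : Type*} [NormedAddCommGroup E] [InnerProductSpace ℝ E]
    (x ℓ v : E) : dist x ℓ ≤ dist x (ℓ + v) ↔ 2 * ⟪x - ℓ, v⟫_ℝ ≤ ‖v‖ ^ 2 := by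
  rw [← sq_le_sq₀ dist_nonneg dist_nonneg, dist_eq_norm, dist_eq_norm, sub_add_eq_sub_sub,
    norm_sub_sq_real (x - ℓ) v]
  constructor <;> intro h <;> linarith

lemma mem_voronoiCell_iff {d : ℕ} {β : ℝ} {x : EuclideanSpace ℝ (Fin (d + 1))}
    (n : Fin (d + 1) → ℤ) :
    x ∈ voronoiCell d β (β • astarPoint d n) ↔
      ∀ k, 2 * ⟪x - β • astarPoint d n, β • astarPoint d k⟫_ℝ ≤ ‖β • astarPoint d k‖ ^ 2 := by
  simp only [← dist_le_dist_add_iff, voronoiCell, Set.mem_ofPred_eq, mem_AstarLattice_iff]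
  constructor
  · intro h k
    exact h _ ⟨n + k, by rw [map_add, smul_add]⟩
  · rintro h _ ⟨n', rfl⟩
    simpa [← smul_add, ← map_add] using h (n' - n)

lemma inner_astarPoint_single (d : ℕ) (z : EuclideanSpace ℝ (Fin (d + 1))) (i : Fin (d + 1)) :
    ⟪z, astarPoint d (Pi.single i 1)⟫_ℝ = (∑ j, z j) / ((d : ℝ) + 1) - z i := by
  rw [inner_astarPoint]
  simp [Pi.single_apply]

lemma norm_sq_astarPoint_single (d : ℕ) (i : Fin (d + 1)) :
    ‖astarPoint d (Pi.single i 1)‖ ^ 2 = (d : ℝ) / ((d : ℝ) + 1) := by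
  rw [norm_sq_astarPoint]
  simp only [Pi.single_apply]
  field_simp
  simp

lemma norm_smul_sq {E : Type*} [NormedAddCommGroup E] [NormedSpace ℝ E] (β : ℝ) (v : E) :
    ‖β • v‖ ^ 2 = β ^ 2 * ‖v‖ ^ 2 := by
  rw [norm_smul, mul_pow, Real.norm_eq_abs, sq_abs]

lemma sub_coord_le_of_mem_voronoiCell {d : ℕ} {β : ℝ} (hβ : 0 < β)
    {x : EuclideanSpace ℝ (Fin (d + 1))} {n : Fin (d + 1) → ℤ}
    (hx : x ∈ voronoiCell d β (β • astarPoint d n)) (i j : Fin (d + 1)) :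
    (x - β • astarPoint d n) i - (x - β • astarPoint d n) j ≤ β * d / ((d : ℝ) + 1) := by
  set z := x - β • astarPoint d n
  have hcell := (mem_voronoiCell_iff n).1 hx
  have hi := hcell (-Pi.single i 1)
  have hj := hcell (Pi.single j 1)
  simp only [map_neg, smul_neg, inner_neg_right, norm_neg, inner_smul_right, norm_smul_sq,
    inner_astarPoint_single, norm_sq_astarPoint_single] at hi hj
  have : 2 * β * (z i - z j) ≤ 2 * β * (β * d / ((d : ℝ) + 1)) := by
    rw [mul_div_assoc]; nlinarith
  exact le_of_mul_le_mul_left this (by positivity)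

lemma sub_le_sqrt_two_mul_norm {ι : Type*} [Fintype ι] (w : EuclideanSpace ℝ ι) {i j : ι}
    (hij : i ≠ j) : w i - w j ≤ √2 * ‖w‖ := by
  have hpair : w i ^ 2 + w j ^ 2 ≤ ‖w‖ ^ 2 := by
    rw [EuclideanSpace.real_norm_sq_eq]
    exact add_le_sum (fun k _ => sq_nonneg (w k)) (mem_univ i) (mem_univ j) hij
  refine (abs_le_of_sq_le_sq' ?_ (by positivity)).2
  rw [mul_pow, Real.sq_sqrt zero_le_two]
  nlinarith [sq_nonneg (w i + w j)]

lemma le_dist_of_two_le_sub {d : ℕ} {β : ℝ} (hβ : 0 < β) {n₁ n₂ : Fin (d + 1) → ℤ}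
    {x y : EuclideanSpace ℝ (Fin (d + 1))} (hx : x ∈ voronoiCell d β (β • astarPoint d n₁))
    (hy : y ∈ voronoiCell d β (β • astarPoint d n₂)) {i j : Fin (d + 1)}
    (hij : 2 ≤ (n₂ - n₁) i - (n₂ - n₁) j) :
    β * √2 / ((d : ℝ) + 1) ≤ dist x y := by
  have hne : i ≠ j := by rintro rfl; omega
  have hx' := sub_coord_le_of_mem_voronoiCell hβ hx j i
  have hy' := sub_coord_le_of_mem_voronoiCell hβ hy i j
  have hij' : (2 : ℝ) ≤ (n₂ i - n₁ i : ℤ) - (n₂ j - n₁ j : ℤ) := by exact_mod_cast hij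
  have hgap : 2 * β / ((d : ℝ) + 1) ≤ (x - y) i - (x - y) j := by
    have hsplit : 2 * β / ((d : ℝ) + 1) = 2 * β - 2 * (β * d / ((d : ℝ) + 1)) := by
      field_simp; ring
    simp only [PiLp.sub_apply, PiLp.smul_apply, astarPoint_apply, smul_eq_mul] at hx' hy' ⊢
    push_cast at hij'
    nlinarith
  have hsqrt : β * √2 / ((d : ℝ) + 1) * √2 = 2 * β / ((d : ℝ) + 1) := by
    rw [mul_div_right_comm, mul_assoc, Real.mul_self_sqrt zero_le_two]; ring
  refine le_of_mul_le_mul_right ?_ (Real.sqrt_pos.2 zero_lt_two)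
  rw [hsqrt, dist_eq_norm]
  exact hgap.trans ((sub_le_sqrt_two_mul_norm (x - y) hne).trans_eq (mul_comm _ _))

lemma inner_astarPoint_le_norm_sq_of_zero_one {d : ℕ} {s k : Fin (d + 1) → ℤ}
    (hs : ∀ i, s i = 0 ∨ s i = 1) (hk₀ : 0 ≤ ∑ i, k i) (hk₁ : ∑ i, k i ≤ d + 1) :
    ⟪astarPoint d s, astarPoint d k⟫_ℝ ≤ ‖astarPoint d k‖ ^ 2 := by
  set K := ∑ i, k i
  set t := ∑ i, s i
  set X := ∑ i, (k i ^ 2 - s i * k i)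
  have hX₀ : 0 ≤ X := sum_nonneg fun i _ => by
    rcases hs i with h | h <;> rw [h] <;> nlinarith [Int.le_self_sq (k i)]
  have hX₁ : K - t ≤ X := by
    rw [← sum_sub_distrib]
    exact sum_le_sum fun i _ => by
      rcases hs i with h | h <;> rw [h] <;> nlinarith [Int.le_self_sq (k i)]
  have key : K * (K - t) ≤ (d + 1) * X := by
    nlinarith [mul_nonneg (sub_nonneg.2 hk₁) hX₀, mul_nonneg hk₀ (sub_nonneg.2 hX₁)]
  have key' : (K : ℝ) * (K - t) ≤ ((d : ℝ) + 1) * X := by exact_mod_cast key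
  simp only [K, t, X, Int.cast_sum, Int.cast_sub, Int.cast_mul, Int.cast_pow,
    sum_sub_distrib] at key'
  rw [inner_astarPoint_astarPoint, norm_sq_astarPoint, ← sub_nonneg]
  field_simp
  linarith

lemma inner_astarPoint_le_norm_sq {d : ℕ} {s : Fin (d + 1) → ℤ} (hs : ∀ i j, s i - s j ≤ 1)
    (k : Fin (d + 1) → ℤ) : ⟪astarPoint d s, astarPoint d k⟫_ℝ ≤ ‖astarPoint d k‖ ^ 2 := by
  -- `astarPoint` ignores constant shifts: move `s` into `{0, 1}` and `∑ k` into `[0, d + 1)`.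
  obtain ⟨i₀, -, hmin⟩ := exists_min_image univ s univ_nonempty
  set q := (∑ i, k i) / (d + 1)
  have hs' := astarPoint_const d (s i₀)
  have hk' := astarPoint_const d q
  have h := inner_astarPoint_le_norm_sq_of_zero_one (s := s - fun _ => s i₀)
    (k := k - fun _ => q) (fun i => by have := hmin i (mem_univ i); have := hs i i₀; simp; omega)
    ?_ ?_
  · simpa [map_sub, hs', hk'] using h
  all_goals
    have hmod : (∑ i, k i) % (d + 1) + (d + 1) * q = ∑ i, k i := Int.emod_add_mul_ediv _ _
    simp only [Pi.sub_apply, sum_sub_distrib, sum_const, card_univ, Fintype.card_fin, nsmul_eq_mul]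
  · have := Int.emod_nonneg (∑ i, k i) (by omega : ((d : ℤ) + 1) ≠ 0)
    push_cast; linarith
  · have := Int.emod_lt_of_pos (∑ i, k i) (by omega : (0 : ℤ) < d + 1)
    push_cast; linarith

lemma midpoint_mem_voronoiCell {d : ℕ} {β : ℝ} {n₁ n₂ : Fin (d + 1) → ℤ}
    (hn : ∀ i j, (n₂ - n₁) i - (n₂ - n₁) j ≤ 1) :
    midpoint ℝ (β • astarPoint d n₁) (β • astarPoint d n₂) ∈
      voronoiCell d β (β • astarPoint d n₁) := by
  rw [mem_voronoiCell_iff]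
  intro k
  rw [midpoint_sub_left, ← smul_sub, ← map_sub, smul_smul, inner_smul_left, inner_smul_right,
    norm_smul_sq]
  have h := inner_astarPoint_le_norm_sq hn k
  simp only [conj_trivial, invOf_eq_inv]
  nlinarith [sq_nonneg β]

/-- In the `A_d^*` lattice scaled by `β > 0`, any two lattice points whose
Voronoi cells do not intersect have Voronoi cells at Euclidean distance at least
`β·√2/(d+1)`. -/
theorem voronoi_cells_far_apart (d : ℕ) (β : ℝ) (hβ : 0 < β)
    (ℓ₁ ℓ₂ : EuclideanSpace ℝ (Fin (d + 1)))
    (h₁ : ℓ₁ ∈ AstarLattice d β) (h₂ : ℓ₂ ∈ AstarLattice d β)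
    (hdisj : Disjoint (voronoiCell d β ℓ₁) (voronoiCell d β ℓ₂)) :
    ∀ x ∈ voronoiCell d β ℓ₁, ∀ y ∈ voronoiCell d β ℓ₂,
      β * Real.sqrt 2 / ((d : ℝ) + 1) ≤ dist x y := by
  intro x hx y hy
  obtain ⟨n₁, rfl⟩ := mem_AstarLattice_iff.1 h₁
  obtain ⟨n₂, rfl⟩ := mem_AstarLattice_iff.1 h₂
  by_cases hfar : ∃ i j, 2 ≤ (n₂ - n₁) i - (n₂ - n₁) j
  · obtain ⟨i, j, hij⟩ := hfar
    exact le_dist_of_two_le_sub hβ hx hy hij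
  · push Not at hfar
    have hmid₁ := midpoint_mem_voronoiCell (β := β) (n₁ := n₁) (n₂ := n₂) fun i j => by
      have := hfar i j; omega
    have hmid₂ := midpoint_mem_voronoiCell (β := β) (n₁ := n₂) (n₂ := n₁) fun i j => by
      have := hfar j i; simp only [Pi.sub_apply] at this ⊢; omega
    rw [midpoint_comm] at hmid₂
    exact absurd hmid₂ (hdisj.notMem_of_mem_left hmid₁)
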